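/- Let f₃(x) = sin(xπ/2)·sin(xπ/3)·sin(xπ/5). Then the set of x in the interval [3/2, 25 + 1/3] with f₃(x) = 0 and f₃′(x) = 0 is exactly {6, 10, 12, 15, 18, 20, 24}, and at each of these points the second derivative f₃″ is nonzero; that is, the double zeros of f₃ in that interval are exactly 6, 10, 12, 15, 18, 20, 24. -/

import Mathlib

noncomputable def pruitt3 : ℝ → ℝ := fun x =>
  Real.sin (x * Real.pi / 2) * Real.sin (x * Real.pi / 3) * Real.sin (x * Real.pi / 5)

/-!
`pruitt3` is a product `u * v * w` of three sines, each with only simple zeros, at the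
multiples of `2`, `3` and `5` respectively. By the Leibniz rule, `pruitt3` and its derivative
vanish together exactly where at least two of the factors vanish, and there the second
derivative reduces to `2 u' v' w`, which is nonzero unless the third factor vanishes as well.
So the double zeros are the integers divisible by exactly two of `2, 3, 5`; in
`[3/2, 25 + 1/3]` no integer is divisible by all three, as `30` lies outside.
-/

open Real Set

section TripleProduct

/- Read `a, b, c` as the values at a point of three functions, `a', b', c'` and `a'', b'', c''`
as those of their first and second derivatives; the hypotheses `a = 0 → a' ≠ 0` say that the
zeros of the factors are simple. -/
variable {R : Type*} [CommRing R] [NoZeroDivisors R] {a b c a' b' c' : R}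

theorem mul_mul_eq_zero_and_leibniz_eq_zero_iff (ha : a = 0 → a' ≠ 0) (hb : b = 0 → b' ≠ 0)
    (hc : c = 0 → c' ≠ 0) :
    a * b * c = 0 ∧ a' * b * c + a * b' * c + a * b * c' = 0 ↔
      a = 0 ∧ b = 0 ∨ a = 0 ∧ c = 0 ∨ b = 0 ∧ c = 0 := by
  rcases eq_or_ne a 0 with rfl | ha0 <;> rcases eq_or_ne b 0 with rfl | hb0 <;>
    rcases eq_or_ne c 0 with rfl | hc0 <;> simp_all

theorem leibniz_second_ne_zero_iff [CharZero R] (a'' b'' c'' : R) (ha : a = 0 → a' ≠ 0)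
    (hb : b = 0 → b' ≠ 0) (hc : c = 0 → c' ≠ 0)
    (h : a = 0 ∧ b = 0 ∨ a = 0 ∧ c = 0 ∨ b = 0 ∧ c = 0) :
    a'' * b * c + a * b'' * c + a * b * c'' + 2 * (a' * b' * c + a' * b * c' + a * b' * c') ≠ 0 ↔
      ¬(a = 0 ∧ b = 0 ∧ c = 0) := by
  rcases h with ⟨rfl, rfl⟩ | ⟨rfl, rfl⟩ | ⟨rfl, rfl⟩ <;> simp_all

end TripleProduct

section TripleProductDeriv

variable {𝕜 : Type*} [NontriviallyNormedField 𝕜] {u v w u' v' w' : 𝕜 → 𝕜}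

theorem HasDerivAt.mul_mul {x a b c : 𝕜} (hu : HasDerivAt u a x) (hv : HasDerivAt v b x)
    (hw : HasDerivAt w c x) :
    HasDerivAt (fun y => u y * v y * w y) (a * v x * w x + u x * b * w x + u x * v x * c) x :=
  ((hu.mul hv).mul hw).congr_deriv (by simp only [Pi.mul_apply]; ring)

theorem deriv_mul_mul (hu : ∀ y, HasDerivAt u (u' y) y) (hv : ∀ y, HasDerivAt v (v' y) y)
    (hw : ∀ y, HasDerivAt w (w' y) y) :
    deriv (fun y => u y * v y * w y) =
      fun y => u' y * v y * w y + u y * v' y * w y + u y * v y * w' y :=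
  funext fun y => ((hu y).mul_mul (hv y) (hw y)).deriv

theorem deriv_deriv_mul_mul (hu : ∀ y, HasDerivAt u (u' y) y) (hv : ∀ y, HasDerivAt v (v' y) y)
    (hw : ∀ y, HasDerivAt w (w' y) y) {x a b c : 𝕜} (hu' : HasDerivAt u' a x)
    (hv' : HasDerivAt v' b x) (hw' : HasDerivAt w' c x) :
    deriv (deriv fun y => u y * v y * w y) x = a * v x * w x + u x * b * w x + u x * v x * c +
      2 * (u' x * v' x * w x + u' x * v x * w' x + u x * v' x * w' x) := by
  rw [deriv_mul_mul hu hv hw]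
  refine ((hu'.mul_mul (hv x) (hw x)).add ((hu x).mul_mul hv' (hw x)) |>.add
    ((hu x).mul_mul (hv x) hw')).deriv.trans ?_
  ring

end TripleProductDeriv

theorem hasDerivAt_sin_mul_pi_div (p x : ℝ) :
    HasDerivAt (fun y => sin (y * π / p)) (π / p * cos (x * π / p)) x := by
  simpa [mul_comm, mul_div_assoc] using ((hasDerivAt_mul_const (π / p)).sin : HasDerivAt _ _ x)

theorem hasDerivAt_const_mul_cos_mul_pi_div (p x : ℝ) :
    HasDerivAt (fun y => π / p * cos (y * π / p)) (-(π / p) ^ 2 * sin (x * π / p)) x := by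
  simp only [mul_div_assoc]
  exact (((hasDerivAt_mul_const (π / p)).cos (x := x)).const_mul (π / p)).congr_deriv (by ring)

theorem pi_div_mul_cos_ne_zero_of_sin_eq_zero {p x : ℝ} (hp : p ≠ 0) (h : sin (x * π / p) = 0) :
    π / p * cos (x * π / p) ≠ 0 := by
  refine mul_ne_zero (div_ne_zero pi_ne_zero hp) ?_
  rcases sin_eq_zero_iff_cos_eq.1 h with h | h <;> simp [h]

theorem sin_mul_pi_div_eq_zero_iff {p : ℝ} (hp : p ≠ 0) {x : ℝ} :
    sin (x * π / p) = 0 ↔ ∃ n : ℤ, x = p * n := by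
  rw [sin_eq_zero_iff]
  refine exists_congr fun n => ?_
  rw [eq_comm, div_eq_iff hp, mul_right_comm, mul_left_inj' pi_ne_zero, mul_comm]

theorem sin_intCast_mul_pi_div_ofNat_eq_zero_iff (N : ℤ) (p : ℕ) [p.AtLeastTwo] :
    sin (N * π / OfNat.ofNat p) = 0 ↔ (OfNat.ofNat p : ℤ) ∣ N := by
  rw [sin_mul_pi_div_eq_zero_iff (NeZero.ne _)]
  exact exists_congr fun n => by rw [← Int.cast_ofNat, ← Int.cast_mul, Int.cast_inj]

theorem exists_intCast_eq_of_pruitt3_eq_zero {x : ℝ} (h : pruitt3 x = 0) : ∃ N : ℤ, x = N := by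
  simp only [pruitt3, mul_eq_zero] at h
  rcases h with (h | h) | h <;> obtain ⟨n, rfl⟩ := (sin_mul_pi_div_eq_zero_iff (by norm_num)).1 h
  exacts [⟨2 * n, by push_cast; rfl⟩, ⟨3 * n, by push_cast; rfl⟩, ⟨5 * n, by push_cast; rfl⟩]

theorem pruitt3_eq_zero_and_deriv_eq_zero_iff (x : ℝ) :
    pruitt3 x = 0 ∧ deriv pruitt3 x = 0 ↔
      sin (x * π / 2) = 0 ∧ sin (x * π / 3) = 0 ∨ sin (x * π / 2) = 0 ∧ sin (x * π / 5) = 0 ∨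
        sin (x * π / 3) = 0 ∧ sin (x * π / 5) = 0 := by
  unfold pruitt3
  rw [deriv_mul_mul (hasDerivAt_sin_mul_pi_div 2) (hasDerivAt_sin_mul_pi_div 3)
    (hasDerivAt_sin_mul_pi_div 5)]
  exact mul_mul_eq_zero_and_leibniz_eq_zero_iff
    (pi_div_mul_cos_ne_zero_of_sin_eq_zero two_ne_zero)
    (pi_div_mul_cos_ne_zero_of_sin_eq_zero three_ne_zero)
    (pi_div_mul_cos_ne_zero_of_sin_eq_zero (by norm_num))

theorem deriv_deriv_pruitt3_ne_zero_iff {x : ℝ}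
    (h : sin (x * π / 2) = 0 ∧ sin (x * π / 3) = 0 ∨ sin (x * π / 2) = 0 ∧ sin (x * π / 5) = 0 ∨
      sin (x * π / 3) = 0 ∧ sin (x * π / 5) = 0) :
    deriv (deriv pruitt3) x ≠ 0 ↔
      ¬(sin (x * π / 2) = 0 ∧ sin (x * π / 3) = 0 ∧ sin (x * π / 5) = 0) := by
  unfold pruitt3
  rw [deriv_deriv_mul_mul (hasDerivAt_sin_mul_pi_div 2) (hasDerivAt_sin_mul_pi_div 3)
    (hasDerivAt_sin_mul_pi_div 5) (hasDerivAt_const_mul_cos_mul_pi_div 2 x)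
    (hasDerivAt_const_mul_cos_mul_pi_div 3 x) (hasDerivAt_const_mul_cos_mul_pi_div 5 x)]
  exact leibniz_second_ne_zero_iff _ _ _
    (pi_div_mul_cos_ne_zero_of_sin_eq_zero two_ne_zero)
    (pi_div_mul_cos_ne_zero_of_sin_eq_zero three_ne_zero)
    (pi_div_mul_cos_ne_zero_of_sin_eq_zero (by norm_num)) h

theorem pruitt3_intCast_eq_zero_and_deriv_eq_zero_iff (N : ℤ) :
    pruitt3 N = 0 ∧ deriv pruitt3 N = 0 ↔ 2 ∣ N ∧ 3 ∣ N ∨ 2 ∣ N ∧ 5 ∣ N ∨ 3 ∣ N ∧ 5 ∣ N := by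
  rw [pruitt3_eq_zero_and_deriv_eq_zero_iff, sin_intCast_mul_pi_div_ofNat_eq_zero_iff,
    sin_intCast_mul_pi_div_ofNat_eq_zero_iff, sin_intCast_mul_pi_div_ofNat_eq_zero_iff]

theorem deriv_deriv_pruitt3_intCast_ne_zero_iff {N : ℤ}
    (h : 2 ∣ N ∧ 3 ∣ N ∨ 2 ∣ N ∧ 5 ∣ N ∨ 3 ∣ N ∧ 5 ∣ N) :
    deriv (deriv pruitt3) N ≠ 0 ↔ ¬(2 ∣ N ∧ 3 ∣ N ∧ 5 ∣ N) := by
  have := deriv_deriv_pruitt3_ne_zero_iff (x := N)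
  rw [sin_intCast_mul_pi_div_ofNat_eq_zero_iff, sin_intCast_mul_pi_div_ofNat_eq_zero_iff,
    sin_intCast_mul_pi_div_ofNat_eq_zero_iff] at this
  exact this h

/-- Equation (3.4): the double zeros of the third Pruitt function in `[3/2, 25 + 1/3]`
are exactly `6, 10, 12, 15, 18, 20, 24`. -/
theorem stmt_14 :
    ({x : ℝ | x ∈ Set.Icc (3 / 2 : ℝ) (25 + 1 / 3) ∧ pruitt3 x = 0 ∧ deriv pruitt3 x = 0} =
      ({6, 10, 12, 15, 18, 20, 24} : Set ℝ)) ∧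
    ∀ x ∈ ({6, 10, 12, 15, 18, 20, 24} : Set ℝ), deriv (deriv pruitt3) x ≠ 0 := by
  have hIcc (N : ℤ) : (N : ℝ) ∈ Icc (3 / 2 : ℝ) (25 + 1 / 3) ↔ 2 ≤ N ∧ N ≤ 25 := by
    rw [← mem_preimage, Int.preimage_Icc]; norm_num
  have hS : ∀ x ∈ ({6, 10, 12, 15, 18, 20, 24} : Set ℝ),
      ∃ N : ℤ, x = N ∧ (N = 6 ∨ N = 10 ∨ N = 12 ∨ N = 15 ∨ N = 18 ∨ N = 20 ∨ N = 24) := by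
    rintro x (rfl | rfl | rfl | rfl | rfl | rfl | rfl)
    exacts [⟨6, by norm_num⟩, ⟨10, by norm_num⟩, ⟨12, by norm_num⟩, ⟨15, by norm_num⟩,
      ⟨18, by norm_num⟩, ⟨20, by norm_num⟩, ⟨24, by norm_num⟩]
  refine ⟨Set.ext fun x => ⟨fun ⟨hx, hdz⟩ => ?_, fun hx => ?_⟩, fun x hx => ?_⟩
  · obtain ⟨N, rfl⟩ := exists_intCast_eq_of_pruitt3_eq_zero hdz.1
    rw [hIcc] at hx
    rw [pruitt3_intCast_eq_zero_and_deriv_eq_zero_iff] at hdz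
    simp only [mem_insert_iff, mem_singleton_iff]
    exact_mod_cast (by omega : N = 6 ∨ N = 10 ∨ N = 12 ∨ N = 15 ∨ N = 18 ∨ N = 20 ∨ N = 24)
  · obtain ⟨N, rfl, hN⟩ := hS x hx
    exact ⟨(hIcc N).2 (by omega), (pruitt3_intCast_eq_zero_and_deriv_eq_zero_iff N).2 (by omega)⟩
  · obtain ⟨N, rfl, hN⟩ := hS x hx
    exact (deriv_deriv_pruitt3_intCast_ne_zero_iff (by omega)).2 (by omega)
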